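/- arXiv:1809.09036 — 2 statements merged into one kernel-verified Lean document; each statement's English description precedes it below -/
import Mathlib

section
/- For every integer n ≥ 0, the product {n+1}·{n}!·{n}! divides {2n}! in Z[s,t], and the quotient, i.e. the Lucas-Catalan polynomial C_{n} = (1/{n+1})·{2n choose n}_L, is a polynomial in s and t all of whose coefficients are nonnegative integers. -/
open MvPolynomial Finset

noncomputable section

/-- Polynomial ring ℤ[s,t] with s = X 0, t = X 1. -/
abbrev P2 : Type := MvPolynomial (Fin 2) ℤ

def ps : P2 := X 0
def pt : P2 := X 1

/-- The Lucas sequence of polynomials: {0}=0, {1}=1, {n}=s{n-1}+t{n-2}. -/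
def lucas : ℕ → P2
  | 0 => 0
  | 1 => 1
  | (n+2) => ps * lucas (n+1) + pt * lucas n

/-- The Lucastorial {n}! = {1}{2}⋯{n}. -/
def lucasFact (n : ℕ) : P2 := ∏ i ∈ Finset.range n, lucas (i+1)

/-- The d-divisible Lucastorial {n:d}! = {d}{2d}⋯{nd}. -/
def lucasFactD (d n : ℕ) : P2 := ∏ i ∈ Finset.range n, lucas (d*(i+1))

/-- A polynomial lies in ℕ[s,t]: all coefficients are nonnegative. -/
def Nonneg (p : P2) : Prop := ∀ m, 0 ≤ p.coeff m

/-- The fraction field ℤ(s,t). -/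
abbrev K : Type := FractionRing P2

def φ : P2 →+* K := algebraMap P2 K

def L (n : ℕ) : K := φ (lucas n)

def LFact (n : ℕ) : K := φ (lucasFact n)

def LFactD (d n : ℕ) : K := φ (lucasFactD d n)

/-- The Lucasnomial {n choose k}, as an element of the fraction field. -/
def lnom (n k : ℕ) : K := LFact n / (LFact k * LFact (n-k))

/-- The d-divisible Lucasnomial {n:d choose k:d}, as an element of the fraction field. -/
def lnomD (d n k : ℕ) : K := LFactD d n / (LFactD d k * LFactD d (n-k))

/-- The Lucas-Catalan number C_{n} = (1/{n+1}) {2n choose n}. -/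
def catL (n : ℕ) : K := lnom (2*n) n / L (n+1)

/-- The Lucas-Fuss-Catalan number C_{n,k} = (1/{kn+1}) {(k+1)n choose n}. -/
def fussCatL (n k : ℕ) : K := lnom ((k+1)*n) n / L (k*n+1)


/-!
Write `⟦m, n⟧` for the Lucasnomial `{m+n choose m}`. The addition formula
`{m+n+1} = {m+1}{n+1} + t{m}{n}` gives the Pascal-type recursion
`⟦m+1, n+1⟧ = {m+2}⟦m+1, n⟧ + t{n}⟦m, n+1⟧`, which defines `⟦m, n⟧` as a polynomial with
nonnegative coefficients satisfying `{m+n}! = ⟦m, n⟧{m}!{n}!`. Splitting `{2n}! = {2n}{2n-1}!`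
by the same addition formula, `{2n} = {n+1}{n} + t{n}{n-1}`, gives
`C_n = ⟦n-1, n⟧ + t⟦n+1, n-2⟧` for `n ≥ 2`, and `C_0 = C_1 = 1`.
-/

def nonnegSubsemiring : Subsemiring P2 where
  carrier := {p | Nonneg p}
  zero_mem' m := by simp
  one_mem' m := by
    rw [coeff_one]
    split_ifs <;> norm_num
  add_mem' hp hq m := by
    rw [coeff_add]
    exact add_nonneg (hp m) (hq m)
  mul_mem' hp hq m := by
    rw [coeff_mul]
    exact sum_nonneg fun x _ => mul_nonneg (hp _) (hq _)

theorem X_mem_nonnegSubsemiring (i : Fin 2) : X i ∈ nonnegSubsemiring := fun m => by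
  rw [coeff_X]
  split_ifs <;> norm_num

theorem lucas_add_two (n : ℕ) : lucas (n + 2) = ps * lucas (n + 1) + pt * lucas n := rfl

theorem lucas_mem_nonnegSubsemiring (n : ℕ) : lucas n ∈ nonnegSubsemiring := by
  induction n using Nat.twoStepInduction with
  | zero => exact zero_mem _
  | one => exact one_mem _
  | more n ih ih' =>
    exact add_mem (mul_mem (X_mem_nonnegSubsemiring 0) ih') (mul_mem (X_mem_nonnegSubsemiring 1) ih)

theorem lucas_add (m n : ℕ) :
    lucas (m + n + 1) = lucas (m + 1) * lucas (n + 1) + pt * lucas m * lucas n := by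
  induction m using Nat.twoStepInduction generalizing n with
  | zero => simp [lucas]
  | one =>
    rw [show 1 + n + 1 = n + 2 by omega, lucas_add_two]
    simp only [lucas]
    ring
  | more m ih ih' =>
    rw [show m + 2 + n + 1 = m + n + 1 + 2 by omega, lucas_add_two,
      show m + n + 1 + 1 = m + 1 + n + 1 by omega, ih', ih n, lucas_add_two (m + 1), lucas_add_two m]
    ring

theorem lucasFact_succ (n : ℕ) : lucasFact (n + 1) = lucasFact n * lucas (n + 1) :=
  prod_range_succ _ _

/-- `lucasBinom m n` is the Lucasnomial `{m+n choose m}`. -/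
def lucasBinom : ℕ → ℕ → P2
  | 0, _ => 1
  | _ + 1, 0 => 1
  | m + 1, n + 1 => lucas (m + 2) * lucasBinom (m + 1) n + pt * lucas n * lucasBinom m (n + 1)

theorem lucasBinom_mem_nonnegSubsemiring (m n : ℕ) : lucasBinom m n ∈ nonnegSubsemiring := by
  induction m, n using lucasBinom.induct with
  | case1 | case2 =>
    rw [lucasBinom]
    exact one_mem _
  | case3 m n ih ih' =>
    rw [lucasBinom]
    exact add_mem (mul_mem (lucas_mem_nonnegSubsemiring _) ih)
      (mul_mem (mul_mem (X_mem_nonnegSubsemiring 1) (lucas_mem_nonnegSubsemiring _)) ih')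

theorem lucasFact_add (m n : ℕ) :
    lucasFact (m + n) = lucasBinom m n * lucasFact m * lucasFact n := by
  induction m, n using lucasBinom.induct with
  | case1 n => simp [lucasBinom, lucasFact]
  | case2 m => simp [lucasBinom, lucasFact]
  | case3 m n ih ih' =>
    rw [show m + 1 + (n + 1) = m + 1 + n + 1 by omega, lucasFact_succ, lucas_add, lucasBinom]
    rw [show m + (n + 1) = m + 1 + n by omega] at ih'
    rw [lucasFact_succ m, lucasFact_succ n] at *
    linear_combination lucas (m + 2) * lucas (n + 1) * ih + pt * lucas (m + 1) * lucas n * ih'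

def lucasCatalanPoly : ℕ → P2
  | 0 | 1 => 1
  | n + 2 => lucasBinom (n + 1) (n + 2) + pt * lucasBinom (n + 3) n

theorem lucasCatalanPoly_mem_nonnegSubsemiring (n : ℕ) :
    lucasCatalanPoly n ∈ nonnegSubsemiring := by
  match n with
  | 0 | 1 => exact one_mem _
  | n + 2 =>
    exact add_mem (lucasBinom_mem_nonnegSubsemiring _ _)
      (mul_mem (X_mem_nonnegSubsemiring 1) (lucasBinom_mem_nonnegSubsemiring _ _))

theorem lucasFact_two_mul (n : ℕ) :
    lucasFact (2 * n) = lucasCatalanPoly n * (lucas (n + 1) * lucasFact n * lucasFact n) := by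
  match n with
  | 0 => simp [lucasCatalanPoly, lucasFact, lucas]
  | 1 => simp [lucasCatalanPoly, lucasFact, prod_range_succ, lucas]
  | n + 2 =>
    have h := lucasFact_add (n + 1) (n + 2)
    have h' := lucasFact_add (n + 3) n
    rw [show n + 3 + n = n + 1 + (n + 2) by omega] at h'
    rw [show 2 * (n + 2) = n + 1 + (n + 2) + 1 by omega, lucasFact_succ,
      show n + 1 + (n + 2) + 1 = n + 2 + (n + 1) + 1 by omega, lucas_add, lucasCatalanPoly]
    rw [lucasFact_succ (n + 2), lucasFact_succ (n + 1), lucasFact_succ n] at *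
    linear_combination lucas (n + 3) * lucas (n + 2) * h + pt * lucas (n + 2) * lucas (n + 1) * h'

/-- {n+1}{n}!{n}! divides {2n}! with quotient (the Lucas-Catalan
polynomial) in ℕ[s,t]. -/
theorem lucasCatalan_nonneg (n : ℕ) :
    ∃ p : P2, Nonneg p ∧ lucasFact (2*n) = p * (lucas (n+1) * lucasFact n * lucasFact n) :=
  ⟨lucasCatalanPoly n, lucasCatalanPoly_mem_nonnegSubsemiring n, lucasFact_two_mul n⟩
end
end

section
/- For all integers d ≥ 1 and 0 ≤ k ≤ n, the product {k:d}!·{n-k:d}! divides {n:d}! in Z[s,t], and the quotient, i.e. the d-divisible Lucasnomial {n:d choose k:d}_L, is a polynomial in s and t all of whose coefficients are nonnegative integers. -/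
/-! The Lucas addition formula {a+b+1} = {a+1}{b+1} + t{a}{b}, applied to {d(j+1) + d(m+1)}, gives
the Pascal-type recurrence
  [j+m+2 : j+1]_d = {d(j+1)+1} [j+m+1 : j+1]_d + t {d(m+1)-1} [j+m+1 : j]_d
for the quotients [j+m : j]_d = {j+m:d}! / ({j:d}! {m:d}!). By induction on j and m, each quotient
is therefore a polynomial, built from earlier ones, {n} and t by sums and products, so its
coefficients are nonnegative. -/

open MvPolynomial Finset

noncomputable section

lemma nonneg_one : Nonneg 1 := by
  intro m
  rw [coeff_one]
  split_ifs <;> norm_num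

lemma nonneg_X (i : Fin 2) : Nonneg (X i) := by
  intro m
  rw [coeff_X]
  split_ifs <;> norm_num

lemma nonneg_add {p q : P2} (hp : Nonneg p) (hq : Nonneg q) : Nonneg (p + q) :=
  fun m => by rw [coeff_add]; exact add_nonneg (hp m) (hq m)

lemma nonneg_mul {p q : P2} (hp : Nonneg p) (hq : Nonneg q) : Nonneg (p * q) :=
  fun m => by rw [coeff_mul]; exact sum_nonneg fun _ _ => mul_nonneg (hp _) (hq _)

lemma lucas_nonneg : ∀ n, Nonneg (lucas n)
  | 0 => fun m => by simp [lucas]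
  | 1 => nonneg_one
  | n + 2 =>
    nonneg_add (nonneg_mul (nonneg_X 0) (lucas_nonneg (n + 1)))
      (nonneg_mul (nonneg_X 1) (lucas_nonneg n))

lemma lucas_add_add_one : ∀ a b : ℕ,
    lucas (a + b + 1) = lucas (a + 1) * lucas (b + 1) + pt * lucas a * lucas b
  | 0, b => by simp [lucas]
  | 1, b => by
      rw [show 1 + b + 1 = b + 2 by omega]
      simp [lucas]
  | a + 2, b => by
      rw [show a + 2 + b + 1 = (a + b + 1) + 2 by omega, lucas,
        show a + b + 1 + 1 = a + 1 + b + 1 by omega, lucas_add_add_one (a + 1) b,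
        lucas_add_add_one a b]
      simp only [lucas]
      ring

lemma lucasFactD_zero (d : ℕ) : lucasFactD d 0 = 1 := prod_range_zero _

lemma lucasFactD_succ (d n : ℕ) :
    lucasFactD d (n + 1) = lucas (d * (n + 1)) * lucasFactD d n := by
  rw [lucasFactD, prod_range_succ, mul_comm, lucasFactD]

/-- The addition formula applied to {d(j+1) + d(m+1)} with d = e + 1, so that
e * (m + 1) + m = d(m+1) - 1. -/
lemma lucasFactD_add_succ_succ (e j m : ℕ) :
    lucasFactD (e + 1) (j + 1 + (m + 1)) =
      lucas ((e + 1) * (j + 1) + 1) * lucasFactD (e + 1) (j + 1 + m) * lucas ((e + 1) * (m + 1)) +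
      pt * lucas (e * (m + 1) + m) * lucasFactD (e + 1) (j + (m + 1)) *
        lucas ((e + 1) * (j + 1)) := by
  have hidx : (e + 1) * (j + 1 + m + 1) = (e + 1) * (j + 1) + (e * (m + 1) + m) + 1 := by ring
  have hB : e * (m + 1) + m + 1 = (e + 1) * (m + 1) := by ring
  rw [← add_assoc, lucasFactD_succ, hidx, lucas_add_add_one, hB,
    show j + (m + 1) = j + 1 + m by omega]
  ring

theorem exists_nonneg_lucasFactD_add_eq_mul (d j m : ℕ) (hd : 1 ≤ d) :
    ∃ p : P2, Nonneg p ∧ lucasFactD d (j + m) = p * (lucasFactD d j * lucasFactD d m) := by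
  obtain ⟨e, rfl⟩ : ∃ e, d = e + 1 := ⟨d - 1, by omega⟩
  induction j generalizing m with
  | zero => exact ⟨1, nonneg_one, by rw [lucasFactD_zero, zero_add, one_mul, one_mul]⟩
  | succ j ihj =>
    induction m with
    | zero => exact ⟨1, nonneg_one, by rw [lucasFactD_zero, add_zero, mul_one, one_mul]⟩
    | succ m ihm =>
      obtain ⟨p₁, hp₁, h₁⟩ := ihm
      obtain ⟨p₂, hp₂, h₂⟩ := ihj (m + 1)
      refine ⟨lucas ((e + 1) * (j + 1) + 1) * p₁ + pt * lucas (e * (m + 1) + m) * p₂,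
        nonneg_add (nonneg_mul (lucas_nonneg _) hp₁)
          (nonneg_mul (nonneg_mul (nonneg_X 1) (lucas_nonneg _)) hp₂), ?_⟩
      rw [lucasFactD_add_succ_succ, h₁, h₂, lucasFactD_succ _ j, lucasFactD_succ _ m]
      ring

/-- {k:d}!{n-k:d}! divides {n:d}! with quotient (the d-divisible
Lucasnomial) in ℕ[s,t]. -/
theorem dLucasnomial_nonneg (d n k : ℕ) (hd : 1 ≤ d) (hk : k ≤ n) :
    ∃ p : P2, Nonneg p ∧ lucasFactD d n = p * (lucasFactD d k * lucasFactD d (n-k)) := by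
  obtain ⟨m, rfl⟩ := Nat.exists_eq_add_of_le hk
  simpa only [Nat.add_sub_cancel_left] using exists_nonneg_lucasFactD_add_eq_mul d k m hd
end
end
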